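/- arXiv:1902.09481 — 2 statements merged into one kernel-verified Lean document; each statement's English description precedes it below -/
import Mathlib

section
/- Let ρ be a density operator on H = ⊗_a H_a and N a neighborhood structure. Then every element σ of the joining set M_N(ρ) satisfies rank(σ) ≤ dim H_N(ρ), where H_N(ρ) is the DQLS subspace of ρ relative to N. -/
open Matrix ComplexOrder

variable {A : Type*} [Fintype A] [DecidableEq A]
variable {ι : A → Type*} [∀ a, Fintype (ι a)] [∀ a, DecidableEq (ι a)]

/-- Combine an assignment on a neighborhood `S` with one on its complement. -/
def glue (S : Finset A) (f : ∀ a : {a // a ∈ S}, ι a) (g : ∀ a : {a // a ∉ S}, ι a) :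
    ∀ a, ι a := fun a => if h : a ∈ S then f ⟨a, h⟩ else g ⟨a, h⟩

/-- The reduced density matrix of `ρ` on the neighborhood `S` (partial trace over `Sᶜ`). -/
noncomputable def rdm (S : Finset A) (ρ : Matrix (∀ a, ι a) (∀ a, ι a) ℂ) :
    Matrix (∀ a : {a // a ∈ S}, ι a) (∀ a : {a // a ∈ S}, ι a) ℂ :=
  fun f f' => ∑ g : ∀ a : {a // a ∉ S}, ι a, ρ (glue S f g) (glue S f' g)

/-- Embed an operator on the neighborhood `S` as `M ⊗ I_{Sᶜ}` on the full space. -/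
noncomputable def liftN (S : Finset A)
    (M : Matrix (∀ a : {a // a ∈ S}, ι a) (∀ a : {a // a ∈ S}, ι a) ℂ) :
    Matrix (∀ a, ι a) (∀ a, ι a) ℂ :=
  fun i j =>
    if ∀ a : {a // a ∉ S}, i a.1 = j a.1 then
      M (fun a => i a.1) (fun a => j a.1) else 0

/-! Writing `σ_S ⊗ I` as the Kraus sum `∑_{g,h} Z_{gh}ᴴ σ Z_{gh}` with `Z_{gh} = I_S ⊗ |h⟩⟨g|`
shows that it is positive semidefinite and, since `∑_g Z_{gg} = I`, that its kernel lies in the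
kernel of `σ`. For Hermitian matrices kernel inclusion dualizes to range inclusion, so
`supp σ ⊆ supp (σ_{N_k} ⊗ I) = supp (ρ_{N_k} ⊗ I)` for every `k`, i.e. `supp σ ⊆ H_N(ρ)`. -/

namespace Matrix

variable {𝕜 n : Type*} [RCLike 𝕜] [Fintype n]

theorem PosSemidef.mulVec_mulVec_eq_zero_of_sum_conj_mulVec_eq_zero {m β : Type*} [Fintype m]
    {σ : Matrix n n 𝕜} (hσ : σ.PosSemidef) {s : Finset β} {V : β → Matrix n m 𝕜} {x : m → 𝕜}
    (hx : (∑ j ∈ s, (V j)ᴴ * σ * V j) *ᵥ x = 0) : ∀ j ∈ s, σ *ᵥ (V j *ᵥ x) = 0 := by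
  have hform : ∀ j, star x ⬝ᵥ ((V j)ᴴ * σ * V j) *ᵥ x = star (V j *ᵥ x) ⬝ᵥ σ *ᵥ (V j *ᵥ x) := by
    intro j
    rw [← mulVec_mulVec, ← mulVec_mulVec, dotProduct_mulVec, ← star_mulVec]
  have hsum : ∑ j ∈ s, star (V j *ᵥ x) ⬝ᵥ σ *ᵥ (V j *ᵥ x) = 0 := by
    simp_rw [← hform, ← dotProduct_sum, ← sum_mulVec, hx, dotProduct_zero]
  intro j hj
  rw [← hσ.dotProduct_mulVec_zero_iff]
  exact (Finset.sum_eq_zero_iff_of_nonneg fun i _ => hσ.dotProduct_mulVec_nonneg _).mp hsum j hj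

theorem IsHermitian.range_mulVecLin_le_of_ker_le [DecidableEq n] {M N : Matrix n n 𝕜}
    (hM : M.IsHermitian) (hN : N.IsHermitian)
    (h : LinearMap.ker N.mulVecLin ≤ LinearMap.ker M.mulVecLin) :
    LinearMap.range M.mulVecLin ≤ LinearMap.range N.mulVecLin := by
  let e := WithLp.linearEquiv 2 𝕜 (n → 𝕜)
  have hrange : ∀ A : Matrix n n 𝕜,
      LinearMap.range A.mulVecLin = (LinearMap.range A.toEuclideanLin).map e.toLinearMap := by
    intro A
    have hA : A.mulVecLin = (e.toLinearMap ∘ₗ A.toEuclideanLin) ∘ₗ e.symm.toLinearMap := rfl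
    rw [hA, LinearEquiv.range_comp, LinearMap.range_comp]
  have hker : ∀ A : Matrix n n 𝕜,
      LinearMap.ker A.toEuclideanLin = (LinearMap.ker A.mulVecLin).comap e.toLinearMap := by
    intro A
    have hA : A.toEuclideanLin = e.symm.toLinearMap ∘ₗ A.mulVecLin ∘ₗ e.toLinearMap := rfl
    rw [hA, LinearEquiv.ker_comp, LinearMap.ker_comp]
  have horth : ∀ A : Matrix n n 𝕜, A.IsHermitian →
      LinearMap.range A.toEuclideanLin = (LinearMap.ker A.toEuclideanLin)ᗮ := fun A hA => by
    rw [← (isSymmetric_toEuclideanLin_iff.mpr hA).orthogonal_range,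
      Submodule.orthogonal_orthogonal]
  rw [hrange, hrange, horth M hM, horth N hN, hker, hker]
  exact Submodule.map_mono (Submodule.orthogonal_le (Submodule.comap_mono h))

end Matrix

set_option linter.unusedSectionVars false

section Neighborhood

variable (S : Finset A)

lemma glue_restrict (i : ∀ a, ι a) :
    glue S (fun a : {a // a ∈ S} => i a.1) (fun a : {a // a ∉ S} => i a.1) = i := by
  funext a
  unfold glue
  split <;> rfl

/-- The operator `I_S ⊗ |h⟩⟨g|`. -/
noncomputable def envShift (g h : ∀ a : {a // a ∉ S}, ι a) : Matrix (∀ a, ι a) (∀ a, ι a) ℂ :=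
  fun k i => if (fun a : {a // a ∉ S} => i a.1) = g ∧
    k = glue S (fun a : {a // a ∈ S} => i a.1) h then 1 else 0

lemma sum_envShift_self : ∑ g : ∀ a : {a // a ∉ S}, ι a, envShift S g g = 1 := by
  ext i j
  simp only [Matrix.sum_apply, envShift, ite_and]
  rw [Finset.sum_ite_eq]
  simp [glue_restrict, one_apply]

lemma liftN_rdm_eq_sum (σ : Matrix (∀ a, ι a) (∀ a, ι a) ℂ) :
    liftN S (rdm S σ) = ∑ p : (∀ a : {a // a ∉ S}, ι a) × (∀ a : {a // a ∉ S}, ι a),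
      (envShift S p.1 p.2)ᴴ * σ * envShift S p.1 p.2 := by
  rw [Fintype.sum_prod_type]
  ext i j
  simp only [Matrix.sum_apply, Matrix.mul_apply, conjTranspose_apply, envShift,
    apply_ite (star : ℂ → ℂ), star_one, star_zero,
    ite_mul, one_mul, zero_mul, mul_ite, mul_one, mul_zero,
    ite_and, Finset.sum_ite_eq', Finset.sum_ite_eq, Finset.mem_univ, if_true,
    Finset.sum_ite_irrel, Finset.sum_const_zero]
  rw [liftN]
  exact if_congr funext_iff.symm rfl rfl

variable {S} {σ : Matrix (∀ a, ι a) (∀ a, ι a) ℂ}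

lemma posSemidef_liftN_rdm (hσ : σ.PosSemidef) : (liftN S (rdm S σ)).PosSemidef := by
  rw [liftN_rdm_eq_sum]
  exact posSemidef_sum _ fun p _ => hσ.conjTranspose_mul_mul_same _

lemma ker_liftN_rdm_le (hσ : σ.PosSemidef) :
    LinearMap.ker (liftN S (rdm S σ)).mulVecLin ≤ LinearMap.ker σ.mulVecLin := by
  intro x hx
  rw [LinearMap.mem_ker, mulVecLin_apply, liftN_rdm_eq_sum] at hx
  have hdiag : ∀ g, σ *ᵥ (envShift S g g *ᵥ x) = 0 := fun g =>
    hσ.mulVec_mulVec_eq_zero_of_sum_conj_mulVec_eq_zero hx (g, g) (Finset.mem_univ _)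
  calc σ.mulVecLin x = σ *ᵥ ∑ g, envShift S g g *ᵥ x := by
        rw [← sum_mulVec, sum_envShift_self, one_mulVec, mulVecLin_apply]
    _ = 0 := by simp only [mulVec_sum, hdiag, Finset.sum_const_zero]

lemma range_le_range_liftN_rdm (hσ : σ.PosSemidef) :
    LinearMap.range σ.mulVecLin ≤ LinearMap.range (liftN S (rdm S σ)).mulVecLin :=
  hσ.isHermitian.range_mulVecLin_le_of_ker_le (posSemidef_liftN_rdm hσ).isHermitian
    (ker_liftN_rdm_le hσ)

end Neighborhood

theorem joining_set_rank_le_dim_DQLS_general {K : Type*} (Nhd : K → Finset A)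
    (ρ : Matrix (∀ a, ι a) (∀ a, ι a) ℂ)
    (σ : Matrix (∀ a, ι a) (∀ a, ι a) ℂ) (hσ : σ.PosSemidef)
    (hjoin : ∀ k, rdm (Nhd k) σ = rdm (Nhd k) ρ) :
    σ.rank ≤ Module.finrank ℂ ↥
      (⨅ k, LinearMap.range (liftN (Nhd k) (rdm (Nhd k) ρ)).mulVecLin) := by
  refine Submodule.finrank_mono (le_iInf fun k => ?_)
  rw [← hjoin k]
  exact range_le_range_liftN_rdm hσ

/-- every element σ of the joining set of ρ satisfies
rank(σ) ≤ dim H_N(ρ), the dimension of the DQLS subspace of ρ. -/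
theorem joining_set_rank_le_dim_DQLS {K : Type*} (Nhd : K → Finset A)
    (ρ : Matrix (∀ a, ι a) (∀ a, ι a) ℂ) (hρ : ρ.PosSemidef) (htr : ρ.trace = 1)
    (σ : Matrix (∀ a, ι a) (∀ a, ι a) ℂ) (hσ : σ.PosSemidef) (hσt : σ.trace = 1)
    (hjoin : ∀ k, rdm (Nhd k) σ = rdm (Nhd k) ρ) :
    σ.rank ≤ Module.finrank ℂ ↥
      (⨅ k, LinearMap.range (liftN (Nhd k) (rdm (Nhd k) ρ)).mulVecLin) :=
  joining_set_rank_le_dim_DQLS_general Nhd ρ σ hσ hjoin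
end

section
/- Let V = span{|0⟩_N, |W̄⟩} be a two-dimensional subspace of (ℂ²)^{⊗N} where |0⟩_N is the all-zero state and |W̄⟩ = (1-c_0²)^{-1/2} Σ_{k=1}^N c_k|e_k⟩ is a normalized one-excitation state orthogonal to |0⟩_N (with c_k > 0, Σ_{k≥1} c_k² = 1 - c_0², 0 ≤ c_0 < 1). Suppose σ = p|φ_0⟩⟨φ_0| + (1-p)|φ_1⟩⟨φ_1| with |φ_0⟩ = α|0⟩_N + β|W̄⟩, |φ_1⟩ = β̄|0⟩_N - ᾱ|W̄⟩, |α|²+|β|² = 1, 0 ≤ p ≤ 1, and σ satisfies: (a) p|β|² + (1-p)|α|² = 1 - c_0², and (b) (2p-1)αβ̄ = c_0√(1-c_0²). Then σ = |GW⟩⟨GW| where |GW⟩ = c_0|0⟩_N + √(1-c_0²)|W̄⟩. -/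
open Matrix ComplexOrder

/-- a state σ supported in the two-dimensional DQLS subspace
span{|0⟩, |W̄⟩} whose coefficients match those of the generalized W state
(conditions (a) and (b)) must equal |GW⟩⟨GW|. -/
theorem GW_joining_set_singleton
    {N : ℕ} (c0 : ℝ) (hc0 : 0 ≤ c0) (hc0' : c0 < 1)
    (c : Fin N → ℝ) (hc : ∀ k, 0 < c k) (hsum : ∑ k, c k ^ 2 = 1 - c0 ^ 2)
    (zeroN Wbar : (Fin N → Fin 2) → ℂ)
    (hzero : zeroN = (Pi.single (fun _ => (0 : Fin 2)) 1 : (Fin N → Fin 2) → ℂ))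
    (hWbar : Wbar = ((Real.sqrt (1 - c0 ^ 2) : ℝ) : ℂ)⁻¹ •
      ∑ k, (c k : ℂ) •
        (Pi.single (fun a => if a = k then (1 : Fin 2) else 0) 1 : (Fin N → Fin 2) → ℂ))
    (α β : ℂ) (hαβ : ‖α‖ ^ 2 + ‖β‖ ^ 2 = 1)
    (p : ℝ) (hp0 : 0 ≤ p) (hp1 : p ≤ 1)
    (φ0 φ1 : (Fin N → Fin 2) → ℂ)
    (hφ0 : φ0 = α • zeroN + β • Wbar)
    (hφ1 : φ1 = (starRingEnd ℂ β) • zeroN - (starRingEnd ℂ α) • Wbar)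
    (σ : Matrix (Fin N → Fin 2) (Fin N → Fin 2) ℂ)
    (hσ : σ = (p : ℂ) • vecMulVec φ0 (star φ0) +
      ((1 - p : ℝ) : ℂ) • vecMulVec φ1 (star φ1))
    (ha : p * ‖β‖ ^ 2 + (1 - p) * ‖α‖ ^ 2 = 1 - c0 ^ 2)
    (hb : ((2 * p - 1 : ℝ) : ℂ) * (α * starRingEnd ℂ β) =
      ((c0 * Real.sqrt (1 - c0 ^ 2) : ℝ) : ℂ)) :
    σ = vecMulVec ((c0 : ℂ) • zeroN + ((Real.sqrt (1 - c0 ^ 2) : ℝ) : ℂ) • Wbar)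
        (star ((c0 : ℂ) • zeroN + ((Real.sqrt (1 - c0 ^ 2) : ℝ) : ℂ) • Wbar)) := by
  set s : ℝ := Real.sqrt (1 - c0 ^ 2) with hs_def
  have h1c0 : (0:ℝ) ≤ 1 - c0 ^ 2 := by nlinarith
  have hs2 : (s:ℂ)^2 = 1 - (c0:ℂ)^2 := by
    exact_mod_cast congrArg Complex.ofReal (Real.sq_sqrt h1c0)
  have hA : α * starRingEnd ℂ α = ((‖α‖:ℝ):ℂ)^2 := by
    rw [Complex.mul_conj']
  have hB : β * starRingEnd ℂ β = ((‖β‖:ℝ):ℂ)^2 := by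
    rw [Complex.mul_conj']
  have ha' : (p:ℂ) * ((‖β‖:ℝ):ℂ)^2 + (1 - (p:ℂ)) * ((‖α‖:ℝ):ℂ)^2
      = 1 - (c0:ℂ)^2 := by exact_mod_cast congrArg Complex.ofReal ha
  have hαβ' : ((‖α‖:ℝ):ℂ)^2 + ((‖β‖:ℝ):ℂ)^2 = 1 := by
    exact_mod_cast congrArg Complex.ofReal hαβ
  have hb' := congrArg (starRingEnd ℂ) hb
  simp only [_root_.map_mul, _root_.map_sub, Complex.conj_ofReal,
    Complex.conj_conj] at hb'
  have hbc := hb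
  push_cast at hb' hbc
  subst hσ hφ0 hφ1
  ext i j
  simp only [Matrix.add_apply, Matrix.smul_apply, vecMulVec_apply, Pi.star_apply,
    Pi.add_apply, Pi.sub_apply, Pi.smul_apply, smul_eq_mul, star_add, star_sub,
    star_mul', Complex.star_def, Complex.conj_ofReal, Complex.conj_conj]
  push_cast
  linear_combination
    (zeroN i * starRingEnd ℂ (zeroN j)) *
      ((p:ℂ) * hA + (1 - (p:ℂ)) * hB + hαβ' - ha' + hs2)
    + (Wbar i * starRingEnd ℂ (Wbar j)) *
      ((p:ℂ) * hB + (1 - (p:ℂ)) * hA - ha' - hs2)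
    + (zeroN i * starRingEnd ℂ (Wbar j)) * hbc
    + (Wbar i * starRingEnd ℂ (zeroN j)) * hb'
    - (zeroN i * starRingEnd ℂ (zeroN j)) * hs2
    + 2 * (Wbar i * starRingEnd ℂ (Wbar j)) * ha'
end
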